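/- arXiv:2203.02780 — 7 statements merged into one kernel-verified Lean document; each statement's English description precedes it below -/
import Mathlib

section
/- The 2×2 Rubik's square is complete: for any two colorings c, c' : {1,…,12} → {r, b, w, g} each of which uses every color exactly three times, there exists an element g of the subgroup of the symmetric group on {1,…,12} generated by M₁, M₂, M₃, M₄ such that c' = c ∘ g⁻¹. -/
/-- The four colors of the 2×2 Rubik's square. -/
inductive Color : Type
  | r | b | w | g
  deriving DecidableEq

/-- Edge `i+1` of the square is represented by `(i : Fin 12)`.
`M₁ = (1 4 6 3)` as a cycle on the edges `1, …, 12`. -/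
def M1 : Equiv.Perm (Fin 12) := ([0, 3, 5, 2] : List (Fin 12)).formPerm
/-- `M₂ = (2 5 7 4)`. -/
def M2 : Equiv.Perm (Fin 12) := ([1, 4, 6, 3] : List (Fin 12)).formPerm
/-- `M₃ = (6 9 11 8)`. -/
def M3 : Equiv.Perm (Fin 12) := ([5, 8, 10, 7] : List (Fin 12)).formPerm
/-- `M₄ = (7 10 12 9)`. -/
def M4 : Equiv.Perm (Fin 12) := ([6, 9, 11, 8] : List (Fin 12)).formPerm

/-- Apply a word of moves to a coloring, leftmost move first;
a single move `M` transforms the coloring `c` into `c ∘ M⁻¹`. -/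
def applyWord (w : List (Equiv.Perm (Fin 12))) (c : Fin 12 → Color) : Fin 12 → Color :=
  w.foldl (fun c (M : Equiv.Perm (Fin 12)) => c ∘ ⇑M⁻¹) c

/-- The initial coloring: `r` on `T = {1,2,4}`, `b` on `L = {3,6,8}`,
`w` on `R = {5,7,10}`, `g` on `B = {9,11,12}`. -/
def c0 : Fin 12 → Color := ![.r, .r, .b, .r, .w, .b, .w, .b, .g, .w, .g, .g]

/-- A certain 12-cycle in the group generated by the moves. -/
def sigmaList : List (Fin 12) := [0, 5, 8, 2, 3, 1, 4, 6, 9, 11, 10, 7]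

set_option maxRecDepth 4000 in
lemma sigma_eq_word : sigmaList.formPerm = M1 * M1 * M2 * M3 * M4 := by decide

set_option maxRecDepth 10000 in
lemma swap_eq_word : Equiv.swap (0 : Fin 12) (sigmaList.formPerm 0) = (M1 * M1 * M2) ^ 5 := by
  decide

lemma closure_moves_eq_top :
    Subgroup.closure ({M1, M2, M3, M4} : Set (Equiv.Perm (Fin 12))) = ⊤ := by
  set S : Set (Equiv.Perm (Fin 12)) := {M1, M2, M3, M4} with hS
  have hM1 : M1 ∈ Subgroup.closure S := Subgroup.subset_closure (by simp [hS])
  have hM2 : M2 ∈ Subgroup.closure S := Subgroup.subset_closure (by simp [hS])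
  have hM3 : M3 ∈ Subgroup.closure S := Subgroup.subset_closure (by simp [hS])
  have hM4 : M4 ∈ Subgroup.closure S := Subgroup.subset_closure (by simp [hS])
  have hσ : sigmaList.formPerm ∈ Subgroup.closure S := by
    rw [sigma_eq_word]
    exact mul_mem (mul_mem (mul_mem (mul_mem hM1 hM1) hM2) hM3) hM4
  have hτ : Equiv.swap (0 : Fin 12) (sigmaList.formPerm 0) ∈ Subgroup.closure S := by
    rw [swap_eq_word]
    exact pow_mem (mul_mem (mul_mem hM1 hM1) hM2) 5
  have h1 : (sigmaList.formPerm).IsCycle :=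
    List.isCycle_formPerm (by decide) (by decide)
  have h2 : (sigmaList.formPerm).support = Finset.univ := by
    rw [List.support_formPerm_of_nodup _ (by decide) (by decide)]
    decide
  have key := Equiv.Perm.closure_cycle_adjacent_swap h1 h2 (0 : Fin 12)
  rw [eq_top_iff, ← key, Subgroup.closure_le]
  intro x hx
  rcases hx with rfl | rfl
  · exact hσ
  · exact hτ

/-- The 2×2 Rubik's square is complete: for any two colorings each using every
color exactly three times, some element of the subgroup generated by the four
basic moves transforms one into the other. -/
theorem rubiks_square_complete (c c' : Fin 12 → Color)
    (hc : ∀ col : Color, (Finset.univ.filter fun i => c i = col).card = 3)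
    (hc' : ∀ col : Color, (Finset.univ.filter fun i => c' i = col).card = 3) :
    ∃ g ∈ Subgroup.closure ({M1, M2, M3, M4} : Set (Equiv.Perm (Fin 12))),
      c' = c ∘ ⇑g⁻¹ := by
  have e : ∀ col : Color, { i // c' i = col } ≃ { i // c i = col } := by
    intro col
    apply Fintype.equivOfCardEq
    rw [Fintype.card_subtype, Fintype.card_subtype, hc col, hc' col]
  let g0 : Equiv.Perm (Fin 12) := Equiv.ofFiberEquiv e
  have hg0 : ∀ i, c (g0 i) = c' i := fun i => Equiv.ofFiberEquiv_map e i
  refine ⟨g0⁻¹, by rw [closure_moves_eq_top]; trivial, ?_⟩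
  funext i
  simpa using (hg0 i).symm
end

section
/- Applying the word G_TR = M₂ M₁ M₂ M₄ M₂ M₄ M₂ M₄ M₂ M₁ M₁ M₁ M₂ M₄ M₄ M₄ M₂ M₄ M₄ M₄ M₂ M₂ M₂ (leftmost move first) to the initial coloring c₀ produces the coloring that assigns w to all edges of T = {1,2,4}, r to all edges of R = {5,7,10}, b to all edges of L = {3,6,8}, and g to all edges of B = {9,11,12}; that is, G_TR switches the top and right color groups of the initial state. -/
set_option maxRecDepth 20000 in
/-- `G_TR` switches the top and right color groups of the initial state. -/
theorem GTR_switches_top_right :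
    applyWord [M2, M1, M2, M4, M2, M4, M2, M4, M2, M1, M1, M1, M2, M4, M4, M4,
      M2, M4, M4, M4, M2, M2, M2] c0 =
      ![.w, .w, .b, .w, .r, .b, .r, .b, .g, .r, .g, .g] := by
  funext i; fin_cases i <;> rfl
end

section
/- Applying the word G_LB = M₃ M₄ M₃ M₁ M₃ M₁ M₃ M₁ M₃ M₃ M₁ M₃ M₁ M₁ M₃ M₃ M₃ M₄ M₄ M₄ (leftmost move first) to the initial coloring c₀ produces the coloring that assigns g to all edges of L = {3,6,8}, b to all edges of B = {9,11,12}, r to all edges of T = {1,2,4}, and w to all edges of R = {5,7,10}; that is, G_LB switches the left and bottom color groups of the initial state. -/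
set_option maxRecDepth 4000 in
/-- `G_LB` switches the left and bottom color groups of the initial state. -/
theorem GLB_switches_left_bottom :
    applyWord [M3, M4, M3, M1, M3, M1, M3, M1, M3, M3, M1, M3, M1, M1, M3, M3,
      M3, M4, M4, M4] c0 =
      ![.r, .r, .g, .r, .w, .g, .w, .g, .b, .w, .b, .b] := by
  funext i
  fin_cases i <;> rfl
end

section
/- Applying the word G_RB = M₄ M₂ M₄ M₃ M₃ M₃ M₂ M₄ M₂ M₂ M₄ M₄ M₄ M₂ M₄ M₃ (leftmost move first) to the initial coloring c₀ produces the coloring that assigns g to all edges of R = {5,7,10}, w to all edges of B = {9,11,12}, r to all edges of T = {1,2,4}, and b to all edges of L = {3,6,8}; that is, G_RB switches the right and bottom color groups of the initial state. -/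
set_option maxRecDepth 4000 in
/-- `G_RB` switches the right and bottom color groups of the initial state. -/
theorem GRB_switches_right_bottom :
    applyWord [M4, M2, M4, M3, M3, M3, M2, M4, M2, M2, M4, M4, M4, M2, M4, M3] c0 =
      ![.r, .r, .b, .r, .g, .b, .g, .b, .w, .g, .w, .w] := by
  ext i; fin_cases i <;> decide
end

section
/- Let G_TB be the word obtained by concatenating the words G_TL = M₁M₃M₁M₂M₂M₂M₃M₃M₃M₁M₂, G_LB = M₃M₄M₃M₁M₃M₁M₃M₁M₃M₃M₁M₃M₁M₁M₃M₃M₃M₄M₄M₄, and G_TL again, applied leftmost move first. Applying G_TB to the initial coloring c₀ produces the coloring that assigns g to all edges of T = {1,2,4}, r to all edges of B = {9,11,12}, b to all edges of L = {3,6,8}, and w to all edges of R = {5,7,10}; that is, G_TB switches the top and bottom color groups of the initial state. -/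
/-- The word `G_TL`. -/
def GTL : List (Equiv.Perm (Fin 12)) := [M1, M3, M1, M2, M2, M2, M3, M3, M3, M1, M2]

/-- The word `G_LB`. -/
def GLB : List (Equiv.Perm (Fin 12)) :=
  [M3, M4, M3, M1, M3, M1, M3, M1, M3, M3, M1, M3, M1, M1, M3, M3, M3, M4, M4, M4]

set_option maxRecDepth 40000 in
/-- `G_TB = G_TL G_LB G_TL` switches the top and bottom color groups of the
initial state. -/
theorem GTB_switches_top_bottom :
    applyWord (GTL ++ GLB ++ GTL) c0 =
      ![.g, .g, .b, .g, .w, .b, .w, .b, .r, .w, .r, .r] := by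
  funext i
  fin_cases i <;> rfl
end

section
/- If at least one of the two cycles has an even number of edges (i.e., k+1 is even or ℓ+1 is even), then the two-polygon 2d-Rubik's shape is complete: the subgroup of the symmetric group on {0, 1, …, k+ℓ} generated by σ₁ and σ₂ is the full symmetric group. -/
/-!
The product `σ₂⁻¹ σ₁` is the full rotation `i ↦ i + 1` of `Fin (k + l + 1)`, so it suffices to find
one transposition of adjacent points in the group. The commutator `σ₁ σ₂ σ₁⁻¹ σ₂⁻¹` is the
3-cycle `(0 1 k+l)`; multiplying it by `σ₁` (resp. `σ₂⁻¹`) gives `(1 k+l)` times a disjoint cycle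
of length `k` (resp. `l`). When that length is odd, the corresponding power is the transposition
`(1 k+l)`, and conjugating by `σ₂` turns it into `(0 1)`.
-/

open Equiv

/-- `f` acts on values as `F`; products of such permutations are computed by arithmetic on `ℕ`. -/
def ActsBy {n : ℕ} (f : Perm (Fin n)) (F : ℕ → ℕ) : Prop :=
  ∀ x : Fin n, (f x : ℕ) = F x

namespace ActsBy

variable {n : ℕ} {f g : Perm (Fin n)} {F G : ℕ → ℕ}

theorem mul (hf : ActsBy f F) (hg : ActsBy g G) : ActsBy (f * g) (F ∘ G) := fun x => by
  rw [Perm.mul_apply, hf, hg, Function.comp_apply]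

theorem congr (hf : ActsBy f F) (h : ∀ v < n, F v = G v) : ActsBy f G := fun x =>
  (hf x).trans (h x x.isLt)

theorem ext (hf : ActsBy f F) (hg : ActsBy g F) : f = g :=
  Equiv.ext fun x => Fin.ext ((hf x).trans (hg x).symm)

theorem inv (hf : ActsBy f F) (hG : ∀ v < n, G v < n ∧ F (G v) = v) : ActsBy f⁻¹ G := fun x => by
  obtain ⟨hlt, hFG⟩ := hG x x.isLt
  have : f ⟨G x, hlt⟩ = x := Fin.ext ((hf _).trans hFG)
  rw [Perm.inv_eq_iff_eq.2 this.symm]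

theorem swap (a b : Fin n) :
    ActsBy (Equiv.swap a b) fun v => if v = a then b else if v = b then a else v := fun x => by
  rw [swap_apply_def]
  split_ifs <;> simp_all [Fin.ext_iff]

theorem pow_apply_of_succ (hf : ActsBy f F) {a b : ℕ} (hF : ∀ v, a ≤ v → v < b → F v = v + 1)
    (x : Fin n) (hx : (x : ℕ) = a) : ∀ j, a + j ≤ b → ((f ^ j) x : ℕ) = a + j
  | 0, _ => by simpa using hx
  | j + 1, hj => by
    rw [pow_succ', Perm.mul_apply, hf, pow_apply_of_succ hf hF x hx j (by omega),
      hF _ (by omega) (by omega), add_assoc]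

/-- `e` is the cycle `(0 a a+1 ⋯ b)`. -/
theorem pow_eq_one_of_cycle {e : Perm (Fin n)} {a b : ℕ} (ha : 0 < a) (hab : a ≤ b)
    (hb : b < n) (he : ActsBy e fun v =>
      if v = 0 then a else if v = b then 0 else if a ≤ v ∧ v < b then v + 1 else v) :
    e ^ (b - a + 2) = 1 := by
  let x₀ : Fin n := ⟨0, by omega⟩
  let xa : Fin n := ⟨a, by omega⟩
  have hx₀ : e x₀ = xa := Fin.ext (he x₀)
  have hmoved : e x₀ ≠ x₀ := by
    rw [hx₀, Ne, Fin.ext_iff]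
    exact ha.ne'
  have hpow := he.pow_apply_of_succ (a := a) (b := b) (fun v _ _ => by grind) xa rfl
  have hcycle : e.IsCycle := by
    refine ⟨x₀, hmoved, fun y hy => ?_⟩
    have hy' : (y : ℕ) = 0 ∨ a ≤ y ∧ (y : ℕ) ≤ b := by
      have := he y
      grind
    rcases hy' with hy0 | ⟨hay, hyb⟩
    · rw [show y = x₀ from Fin.ext hy0]
    · have hyx : (e ^ (y - a)) xa = y := Fin.ext (by rw [hpow _ (by omega)]; omega)
      rw [← hyx, Perm.sameCycle_pow_right, ← hx₀]
      exact Perm.SameCycle.refl _ _ |>.apply_right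
  rw [hcycle.pow_eq_one_iff]
  refine ⟨x₀, hmoved, Fin.ext ?_⟩
  rw [pow_succ', pow_succ, Perm.mul_apply, Perm.mul_apply, hx₀, he, hpow _ (by omega)]
  grind

end ActsBy

theorem pow_swap_mul_eq_swap {α : Type*} [DecidableEq α] {a b : α} {e : Perm α} {m : ℕ}
    (hm : Odd m) (ha : e a = a) (hb : e b = b) (he : e ^ m = 1) :
    (swap a b * e) ^ m = swap a b := by
  have hdisj : Perm.Disjoint (swap a b) e := fun x => by
    by_cases hxa : x = a
    · exact .inr (hxa ▸ ha)
    by_cases hxb : x = b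
    · exact .inr (hxb ▸ hb)
    exact .inl (swap_apply_of_ne_of_ne hxa hxb)
  obtain ⟨r, rfl⟩ := hm
  rw [hdisj.commute.mul_pow, he, mul_one, pow_succ, pow_mul, sq, swap_mul_self, one_pow, one_mul]

theorem swap_mem_of_pow_swap_mul_eq_one {α : Type*} [DecidableEq α] {G : Subgroup (Perm α)}
    {a b : α} {d : Perm α} {m : ℕ} (hd : d ∈ G) (hm : Odd m) (ha : (swap a b * d) a = a)
    (hb : (swap a b * d) b = b) (he : (swap a b * d) ^ m = 1) : swap a b ∈ G := by
  have hdm := pow_swap_mul_eq_swap hm ha hb he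
  rw [swap_mul_self_mul] at hdm
  exact hdm ▸ pow_mem hd m

def rotFirst (k v : ℕ) : ℕ :=
  if v < k then v + 1 else if v = k then 0 else v

def rotSecond (k l v : ℕ) : ℕ :=
  if v = 0 then k + l else if v = k + 1 then 0 else if k + 1 < v then v - 1 else v

section TwoPolygon

variable {k l : ℕ} {σ₁ σ₂ : Perm (Fin (k + l + 1))}

theorem inv_actsBy_rotFirst (hσ₁ : ActsBy σ₁ (rotFirst k)) :
    ActsBy σ₁⁻¹ fun v => if v = 0 then k else if v ≤ k then v - 1 else v :=
  hσ₁.inv fun v hv => by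
    grind [rotFirst]

theorem inv_actsBy_rotSecond (hl : 1 ≤ l) (hσ₂ : ActsBy σ₂ (rotSecond k l)) :
    ActsBy σ₂⁻¹ fun v => if v = 0 then k + 1 else if v = k + l then 0 else if k < v then v + 1 else v :=
  hσ₂.inv fun v hv => by
    grind [rotSecond]

theorem inv_mul_eq_finRotate (hl : 1 ≤ l) (hσ₁ : ActsBy σ₁ (rotFirst k))
    (hσ₂ : ActsBy σ₂ (rotSecond k l)) : σ₂⁻¹ * σ₁ = finRotate (k + l + 1) := by
  have hR : ActsBy (finRotate (k + l + 1)) fun v => if v = k + l then 0 else v + 1 := fun x => by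
    simp only [coe_finRotate, Fin.ext_iff, Fin.val_last]
  refine ((inv_actsBy_rotSecond hl hσ₂).mul hσ₁).congr (fun v hv => ?_) |>.ext hR
  grind [rotFirst]

theorem commutator_actsBy (hk : 1 ≤ k) (hl : 1 ≤ l) (hσ₁ : ActsBy σ₁ (rotFirst k))
    (hσ₂ : ActsBy σ₂ (rotSecond k l)) :
    ActsBy (σ₁ * σ₂ * σ₁⁻¹ * σ₂⁻¹)
      fun v => if v = 0 then 1 else if v = 1 then k + l else if v = k + l then 0 else v := by
  refine (((hσ₁.mul hσ₂).mul (inv_actsBy_rotFirst hσ₁)).mul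
    (inv_actsBy_rotSecond hl hσ₂)).congr fun v hv => ?_
  grind [rotFirst, rotSecond]

theorem swap_mem_of_odd_left (hk : 2 ≤ k) (hl : 1 ≤ l) (hodd : Odd k)
    (hσ₁ : ActsBy σ₁ (rotFirst k)) (hσ₂ : ActsBy σ₂ (rotSecond k l))
    {G : Subgroup (Perm (Fin (k + l + 1)))} (h₁ : σ₁ ∈ G) (h₂ : σ₂ ∈ G) :
    swap ⟨1, by omega⟩ (Fin.last (k + l)) ∈ G := by
  have hd : σ₁ * (σ₁ * σ₂ * σ₁⁻¹ * σ₂⁻¹) ∈ G :=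
    mul_mem h₁ (mul_mem (mul_mem (mul_mem h₁ h₂) (inv_mem h₁)) (inv_mem h₂))
  have he : ActsBy (swap ⟨1, by omega⟩ (Fin.last (k + l)) * (σ₁ * (σ₁ * σ₂ * σ₁⁻¹ * σ₂⁻¹)))
      fun v => if v = 0 then 2 else if v = k then 0 else if 2 ≤ v ∧ v < k then v + 1 else v := by
    refine ((ActsBy.swap _ _).mul (hσ₁.mul (commutator_actsBy (by omega) hl hσ₁ hσ₂))).congr
      fun v hv => ?_
    grind [rotFirst]
  have hpow := he.pow_eq_one_of_cycle (by omega) hk (by omega)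
  rw [Nat.sub_add_cancel hk] at hpow
  refine swap_mem_of_pow_swap_mul_eq_one hd hodd (Fin.ext ?_) (Fin.ext ?_) hpow <;>
    (rw [he]; grind)

theorem swap_mem_of_odd_right (hk : 1 ≤ k) (hl : 2 ≤ l) (hodd : Odd l)
    (hσ₁ : ActsBy σ₁ (rotFirst k)) (hσ₂ : ActsBy σ₂ (rotSecond k l))
    {G : Subgroup (Perm (Fin (k + l + 1)))} (h₁ : σ₁ ∈ G) (h₂ : σ₂ ∈ G) :
    swap ⟨1, by omega⟩ (Fin.last (k + l)) ∈ G := by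
  have hd : σ₁ * σ₂ * σ₁⁻¹ * σ₂⁻¹ * σ₂⁻¹ ∈ G :=
    mul_mem (mul_mem (mul_mem (mul_mem h₁ h₂) (inv_mem h₁)) (inv_mem h₂)) (inv_mem h₂)
  have he : ActsBy (swap ⟨1, by omega⟩ (Fin.last (k + l)) * (σ₁ * σ₂ * σ₁⁻¹ * σ₂⁻¹ * σ₂⁻¹))
      fun v => if v = 0 then k + 1 else if v = k + l - 1 then 0
        else if k + 1 ≤ v ∧ v < k + l - 1 then v + 1 else v := by
    refine ((ActsBy.swap _ _).mul ((commutator_actsBy hk (by omega) hσ₁ hσ₂).mul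
      (inv_actsBy_rotSecond (by omega) hσ₂))).congr fun v hv => ?_
    grind
  have hpow := he.pow_eq_one_of_cycle (by omega) (by omega) (by omega)
  rw [show k + l - 1 - (k + 1) + 2 = l by omega] at hpow
  refine swap_mem_of_pow_swap_mul_eq_one hd hodd (Fin.ext ?_) (Fin.ext ?_) hpow <;>
    (rw [he]; grind)

theorem inv_mul_swap_mul_eq (hk : 1 ≤ k) (hl : 1 ≤ l) (hσ₂ : ActsBy σ₂ (rotSecond k l)) :
    σ₂⁻¹ * swap ⟨1, by omega⟩ (Fin.last (k + l)) * σ₂ = swap 0 (finRotate (k + l + 1) 0) := by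
  have hσ₂' := inv_actsBy_rotSecond hl hσ₂
  have h1 : σ₂⁻¹ ⟨1, by omega⟩ = finRotate (k + l + 1) 0 := by
    refine Fin.ext ?_
    rw [hσ₂', coe_finRotate]
    grind
  have hlast : σ₂⁻¹ (Fin.last (k + l)) = 0 := Fin.ext (by rw [hσ₂']; grind)
  rw [← inv_inv σ₂, inv_inv σ₂⁻¹, ← swap_apply_apply, h1, hlast, swap_comm]

end TwoPolygon

/-- If at least one of the two glued polygons has an even number of edges, the
two-polygon 2d-Rubik's shape is complete: the rotations `σ₁ = (0 1 ⋯ k)` and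
`σ₂ = (0, k+ℓ, k+ℓ-1, …, k+1)` generate the full symmetric group on the edge
set `{0, 1, …, k+ℓ}`. -/
theorem two_polygon_even_complete (k l : ℕ) (hk : 2 ≤ k) (hl : 2 ≤ l)
    (heven : Even (k + 1) ∨ Even (l + 1))
    (σ₁ σ₂ : Equiv.Perm (Fin (k + l + 1)))
    (hσ₁ : ∀ x : Fin (k + l + 1),
      (σ₁ x).val = if x.val < k then x.val + 1 else if x.val = k then 0 else x.val)
    (hσ₂ : ∀ x : Fin (k + l + 1),
      (σ₂ x).val = if x.val = 0 then k + l
        else if x.val = k + 1 then 0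
        else if k + 1 < x.val then x.val - 1
        else x.val) :
    Subgroup.closure ({σ₁, σ₂} : Set (Equiv.Perm (Fin (k + l + 1)))) = ⊤ := by
  set G := Subgroup.closure ({σ₁, σ₂} : Set (Perm (Fin (k + l + 1))))
  have h₁ : σ₁ ∈ G := Subgroup.subset_closure (Set.mem_insert _ _)
  have h₂ : σ₂ ∈ G := Subgroup.subset_closure (Set.mem_insert_of_mem _ rfl)
  have hT : swap ⟨1, by omega⟩ (Fin.last (k + l)) ∈ G := by
    rcases heven with h | h
    · exact swap_mem_of_odd_left hk (by omega) (Nat.not_even_iff_odd.mp (Nat.even_add_one.mp h))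
        hσ₁ hσ₂ h₁ h₂
    · exact swap_mem_of_odd_right (by omega) hl (Nat.not_even_iff_odd.mp (Nat.even_add_one.mp h))
        hσ₁ hσ₂ h₁ h₂
  have hR : finRotate (k + l + 1) ∈ G :=
    inv_mul_eq_finRotate (by omega) hσ₁ hσ₂ ▸ mul_mem (inv_mem h₂) h₁
  have hS : swap 0 (finRotate (k + l + 1) 0) ∈ G :=
    inv_mul_swap_mul_eq (by omega) (by omega) hσ₂ ▸ mul_mem (mul_mem (inv_mem h₂) hT) h₂
  rw [eq_top_iff, ← Perm.closure_cycle_adjacent_swap (isCycle_finRotate_of_le (by omega))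
    (support_finRotate_of_le (by omega)) 0, Subgroup.closure_le]
  rintro _ (rfl | rfl) <;> assumption
end

section
/- Let n ≥ 2 and m ≥ 1, and work in the symmetric group on {0, 1, …, n+m−1}. Suppose a subgroup H contains every permutation that fixes each of the points n, n+1, …, n+m−1 (i.e., H contains the natural copy of the full symmetric group on {0, …, n−1}). Let ℓ ∈ {0, …, n−1} and let σ be the (m+1)-cycle (ℓ, n, n+1, …, n+m−1), fixing all other points. Then the subgroup generated by H together with σ is the full symmetric group on {0, 1, …, n+m−1}. (This is the inductive step of the paper's Theorem 1: attaching a new polygon C_{n+1} of m new edges to a complete 2d-Rubik's shape along a single shared edge ℓ, with σ the rotation of the new polygon, yields a complete 2d-Rubik's shape.) -/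
/-- Inductive step: if the subgroup `H` of the symmetric group on
`{0, 1, …, n+m-1}` contains every permutation fixing the points
`n, n+1, …, n+m-1`, and `σ` is the `(m+1)`-cycle `(ℓ, n, n+1, …, n+m-1)` for
some `ℓ < n`, then `H` together with `σ` generates the full symmetric group. -/
theorem attach_polygon_complete (n m : ℕ) (hn : 2 ≤ n) (hm : 1 ≤ m)
    (H : Subgroup (Equiv.Perm (Fin (n + m))))
    (hH : ∀ π : Equiv.Perm (Fin (n + m)),
      (∀ x : Fin (n + m), n ≤ x.val → π x = x) → π ∈ H)
    (l : ℕ) (hl : l < n)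
    (σ : Equiv.Perm (Fin (n + m)))
    (hσ : ∀ x : Fin (n + m),
      (σ x).val = if x.val = l then n
        else if n ≤ x.val ∧ x.val < n + m - 1 then x.val + 1
        else if x.val = n + m - 1 then l
        else x.val) :
    Subgroup.closure ((H : Set (Equiv.Perm (Fin (n + m)))) ∪ {σ}) = ⊤ := by
  have main : ∀ K : Subgroup (Equiv.Perm (Fin (n + m))), σ ∈ K →
      (∀ π ∈ H, π ∈ K) → {f : Equiv.Perm (Fin (n + m)) | f.IsSwap} ⊆ K := by
    intro K hσK hHK
    have hnm : n < n + m := by omega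
    obtain ⟨a, ha, hal⟩ : ∃ a : ℕ, a < n ∧ a ≠ l :=
      ⟨if l = 0 then 1 else 0, by split <;> omega, by split <;> omega⟩
    have ham : a < n + m := by omega
    have hlm : l < n + m := by omega
    -- σ values
    have hσa : σ ⟨a, ham⟩ = ⟨a, ham⟩ := by
      apply Fin.ext
      rw [hσ ⟨a, ham⟩]
      simp only
      rw [if_neg hal, if_neg (by omega), if_neg (by omega)]
    have hσl : σ ⟨l, hlm⟩ = ⟨n, hnm⟩ := by
      apply Fin.ext
      rw [hσ ⟨l, hlm⟩]
      simp
    have hσmid : ∀ x : Fin (n + m), n ≤ x.val → x.val < n + m - 1 →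
        (σ x).val = x.val + 1 := by
      intro x h1 h2
      rw [hσ x, if_neg (by omega), if_pos ⟨h1, h2⟩]
    -- swaps of low points are in H hence K
    have hlow : ∀ x y : Fin (n + m), x.val < n → y.val < n → Equiv.swap x y ∈ K := by
      intro x y hx hy
      apply hHK
      apply hH
      intro z hz
      apply Equiv.swap_apply_of_ne_of_ne
      · intro h; rw [h] at hz; omega
      · intro h; rw [h] at hz; omega
    -- conjugation step
    have hconj : ∀ x y : Fin (n + m), Equiv.swap x y ∈ K →
        Equiv.swap (σ x) (σ y) ∈ K := by
      intro x y h
      rw [Equiv.swap_apply_apply]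
      exact K.mul_mem (K.mul_mem hσK h) (K.inv_mem hσK)
    -- swap a (n+j) ∈ K for j < m
    have hhigh : ∀ j : ℕ, (hj : j < m) → Equiv.swap ⟨a, ham⟩ ⟨n + j, by omega⟩ ∈ K := by
      intro j
      induction j with
      | zero =>
        intro hj
        have h0 : σ ⟨l, hlm⟩ = ⟨n + 0, by omega⟩ := by rw [hσl]; rfl
        have key := hconj ⟨a, ham⟩ ⟨l, hlm⟩ (hlow ⟨a, ham⟩ ⟨l, hlm⟩ ha hl)
        rwa [hσa, h0] at key
      | succ j ih =>
        intro hj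
        have hmid : σ ⟨n + j, by omega⟩ = ⟨n + (j + 1), by omega⟩ :=
          Fin.ext (hσmid ⟨n + j, by omega⟩ (by simp) (by simp; omega))
        have key := hconj ⟨a, ham⟩ ⟨n + j, by omega⟩ (ih (by omega))
        rwa [hσa, hmid] at key
    -- swap ⟨a⟩ x ∈ K for all x
    have hax : ∀ x : Fin (n + m), Equiv.swap ⟨a, ham⟩ x ∈ K := by
      intro x
      rcases lt_or_ge x.val n with hx | hx
      · exact hlow _ _ ha hx
      · have hx2 : x = ⟨n + (x.val - n), by omega⟩ := Fin.ext (by simp only [Fin.val_mk]; omega)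
        rw [hx2]
        exact hhigh (x.val - n) (by have := x.isLt; omega)
    rintro f ⟨x, y, hxy, rfl⟩
    rcases eq_or_ne y ⟨a, ham⟩ with rfl | hy
    · rw [Equiv.swap_comm]; exact hax x
    · have h3 := Equiv.swap_mul_swap_mul_swap (x := y) (y := (⟨a, ham⟩ : Fin (n + m)))
        (z := x) hy hxy.symm
      rw [← h3, Equiv.swap_comm y ⟨a, ham⟩]
      exact K.mul_mem (K.mul_mem (hax x) (hax y)) (hax x)
  rw [eq_top_iff, ← Equiv.Perm.closure_isSwap, Subgroup.closure_le]
  exact main _ (Subgroup.subset_closure (Or.inr rfl))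
    (fun π hπ => Subgroup.subset_closure (Or.inl hπ))
end
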